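/- Let Z ⊆ ℝⁿ be a nonempty closed convex set, F : Z → ℝⁿ a monotone and L-Lipschitz operator, and z* ∈ Z a solution of the variational inequality. For any T ≥ 1 and D > 0, the T-th iterate z_T of the extragradient algorithm with any constant step size η ∈ (0, 1/L) started at z₀ ∈ Z satisfies Gap_{Z,F,D}(z_T) ≤ (1/√T) · 3D‖z₀ − z*‖ / (η√(1 − (ηL)²)). -/
import Mathlib

open scoped RealInnerProductSpace

section Aux

variable {E : Type*} [NormedAddCommGroup E] [InnerProductSpace ℝ E]

/-- Variational characterization of the metric projection onto a convex set. -/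
lemma eg_proj_var {Z : Set E} (hconv : Convex ℝ Z)
    (proj : E → E) (hmem : ∀ x, proj x ∈ Z)
    (hmin : ∀ x, ∀ y ∈ Z, ‖x - proj x‖ ≤ ‖x - y‖) :
    ∀ x, ∀ y ∈ Z, ⟪x - proj x, y - proj x⟫ ≤ 0 := by
  intro x y hy
  by_contra hcon
  push_neg at hcon
  have hN0 : 0 < ‖y - proj x‖ ^ 2 := by
    rcases eq_or_lt_of_le (by positivity : (0:ℝ) ≤ ‖y - proj x‖ ^ 2) with h | h
    · exfalso
      have h0 : y - proj x = 0 := by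
        have := (pow_eq_zero_iff (n := 2) (by norm_num)).mp h.symm
        simpa [norm_eq_zero] using this
      rw [h0, inner_zero_right] at hcon
      linarith
    · exact h
  have ht0 : 0 < min 1 (⟪x - proj x, y - proj x⟫ / ‖y - proj x‖ ^ 2) :=
    lt_min one_pos (div_pos hcon hN0)
  set t : ℝ := min 1 (⟪x - proj x, y - proj x⟫ / ‖y - proj x‖ ^ 2) with htdef
  have ht1 : t ≤ 1 := min_le_left _ _
  have hmemc : (1 - t) • proj x + t • y ∈ Z :=
    hconv (hmem x) hy (by linarith) (le_of_lt ht0) (by ring)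
  have hle := hmin x _ hmemc
  have hsq : ‖x - proj x‖ ^ 2 ≤ ‖x - ((1 - t) • proj x + t • y)‖ ^ 2 :=
    pow_le_pow_left₀ (norm_nonneg _) hle 2
  have hveq : x - ((1 - t) • proj x + t • y) = (x - proj x) - t • (y - proj x) := by
    module
  have expand : ‖(x - proj x) - t • (y - proj x)‖ ^ 2 =
      ‖x - proj x‖ ^ 2 - 2 * (t * ⟪x - proj x, y - proj x⟫)
        + t ^ 2 * ‖y - proj x‖ ^ 2 := by
    rw [norm_sub_sq_real, real_inner_smul_right, norm_smul, Real.norm_eq_abs,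
      mul_pow, sq_abs]
  rw [hveq, expand] at hsq
  have h2I : 2 * ⟪x - proj x, y - proj x⟫ ≤ t * ‖y - proj x‖ ^ 2 := by
    have hmul : t * (2 * ⟪x - proj x, y - proj x⟫) ≤ t * (t * ‖y - proj x‖ ^ 2) := by
      nlinarith [hsq]
    exact le_of_mul_le_mul_left hmul ht0
  have htN : t * ‖y - proj x‖ ^ 2 ≤ ⟪x - proj x, y - proj x⟫ := by
    calc t * ‖y - proj x‖ ^ 2
        ≤ (⟪x - proj x, y - proj x⟫ / ‖y - proj x‖ ^ 2) * ‖y - proj x‖ ^ 2 :=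
          mul_le_mul_of_nonneg_right (min_le_right _ _) (le_of_lt hN0)
      _ = ⟪x - proj x, y - proj x⟫ := div_mul_cancel₀ _ (ne_of_gt hN0)
  linarith

/-- Nonexpansiveness, from the variational inequalities. -/
lemma eg_nonexp (u v pu pv : E)
    (h1 : ⟪u - pu, pv - pu⟫ ≤ 0) (h2 : ⟪v - pv, pu - pv⟫ ≤ 0) :
    ‖pu - pv‖ ≤ ‖u - v‖ := by
  have key : ‖pu - pv‖ ^ 2 ≤ ⟪u - v, pu - pv⟫ := by
    have c1 := real_inner_comm pu pv
    rw [norm_sub_sq_real]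
    simp only [inner_sub_left, inner_sub_right, real_inner_self_eq_norm_sq] at h1 h2 ⊢
    linarith
  have hcs := real_inner_le_norm (u - v) (pu - pv)
  nlinarith [norm_nonneg (pu - pv), norm_nonneg (u - v), key, hcs]

/-- One-step descent inequality for extragradient (abstract form). -/
lemma eg_descent {c : ℝ} (d e f x y : E)
    (hP2 : ⟪d - x, -e⟫ ≤ 0)
    (hP1 : ⟪(d + e) - y, -f⟫ ≤ 0)
    (hyu : 0 ≤ ⟪y, e + f⟫)
    (hL : ‖y - x‖ ≤ c * ‖d‖) :
    ‖f‖ ^ 2 ≤ ‖d + e + f‖ ^ 2 - (1 - c ^ 2) * ‖d‖ ^ 2 := by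
  have hcs : ⟪y - x, e⟫ ≤ (c * ‖d‖) * ‖e‖ :=
    le_trans (real_inner_le_norm _ _) (mul_le_mul_of_nonneg_right hL (norm_nonneg _))
  have hsq : (0:ℝ) ≤ (c * ‖d‖ - ‖e‖) ^ 2 := sq_nonneg _
  have c1 := real_inner_comm d e
  have c2 := real_inner_comm d f
  have c3 := real_inner_comm e f
  simp only [norm_add_sq_real, inner_add_left, inner_add_right, inner_sub_left,
    inner_sub_right, inner_neg_left, inner_neg_right,
    real_inner_self_eq_norm_sq] at hP2 hP1 hyu hcs ⊢
  nlinarith [hsq, hP2, hP1, hyu, hcs]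

/-- The key last-iterate lemma: the (shifted) tangent residual is nonincreasing.
This is certified by an explicit sum-of-squares identity. -/
lemma eg_residual_mono (p a q n x y w : E)
    (hmono : 0 ≤ ⟪x - w, p - q⟫)
    (hlip : ‖y - w‖ ≤ ‖a - q‖)
    (hC9 : ⟪(p - y) - q, p - q⟫ ≤ 0)
    (hC7 : ⟪n, a - p⟫ ≤ 0)
    (hC12 : ⟪(p - x) - a, q - a⟫ ≤ 0) :
    ‖w + ((p - y) - q)‖ ≤ ‖x + n‖ := by
  have hlip2 : ‖y - w‖ ^ 2 ≤ ‖a - q‖ ^ 2 :=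
    pow_le_pow_left₀ (norm_nonneg _) hlip 2
  have hsos : (0:ℝ) ≤ ‖(x + n) - (p - a)‖ ^ 2 := by positivity
  have key : ‖w + ((p - y) - q)‖ ^ 2 ≤ ‖x + n‖ ^ 2 := by
    have c1 := real_inner_comm p q
    have c2 := real_inner_comm p a
    have c3 := real_inner_comm a q
    have c4 := real_inner_comm x p
    have c5 := real_inner_comm x a
    have c6 := real_inner_comm x q
    have c7 := real_inner_comm y p
    have c8 := real_inner_comm y a
    have c9 := real_inner_comm y q
    have c10 := real_inner_comm w p
    have c11 := real_inner_comm w a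
    have c12 := real_inner_comm w q
    have c13 := real_inner_comm n p
    have c14 := real_inner_comm n a
    have c15 := real_inner_comm n q
    have c16 := real_inner_comm x n
    have c17 := real_inner_comm x y
    have c18 := real_inner_comm x w
    have c19 := real_inner_comm y w
    have c20 := real_inner_comm y n
    have c21 := real_inner_comm w n
    simp only [norm_add_sq_real, norm_sub_sq_real, inner_add_left, inner_add_right,
      inner_sub_left, inner_sub_right, real_inner_self_eq_norm_sq]
      at hmono hlip2 hC9 hC7 hC12 hsos ⊢
    linarith [hmono, hlip2, hC9, hC7, hC12, hsos]
  have h := Real.sqrt_le_sqrt key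
  rwa [Real.sqrt_sq (norm_nonneg _), Real.sqrt_sq (norm_nonneg _)] at h

end Aux

set_option maxHeartbeats 1000000 in
/-- Last-iterate convergence rate of the extragradient algorithm in the constrained setting:
for a monotone `L`-Lipschitz operator `F` on a nonempty closed convex `Z ⊆ ℝⁿ`, a solution
`z*` of the VI, step size `η ∈ (0, 1/L)`, any `T ≥ 1` and `D > 0`, the `T`-th EG iterate
satisfies `Gap_{Z,F,D}(z_T) ≤ 3D‖z₀ - z*‖/(√T · η√(1-(ηL)²))`. -/
theorem eg_last_iterate_gap_constrained {n : ℕ}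
    (Z : Set (EuclideanSpace ℝ (Fin n))) (hne : Z.Nonempty) (hcl : IsClosed Z)
    (hconv : Convex ℝ Z)
    (F : EuclideanSpace ℝ (Fin n) → EuclideanSpace ℝ (Fin n)) (L : ℝ)
    (hmono : ∀ z ∈ Z, ∀ z' ∈ Z, 0 ≤ ⟪F z - F z', z - z'⟫)
    (hLip : ∀ z ∈ Z, ∀ z' ∈ Z, ‖F z - F z'‖ ≤ L * ‖z - z'‖)
    (η : ℝ) (hL : 0 < L) (hη0 : 0 < η) (hη1 : η < 1 / L)
    (proj : EuclideanSpace ℝ (Fin n) → EuclideanSpace ℝ (Fin n))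
    (hprojmem : ∀ x, proj x ∈ Z)
    (hprojmin : ∀ x, ∀ y ∈ Z, ‖x - proj x‖ ≤ ‖x - y‖)
    (zs : EuclideanSpace ℝ (Fin n)) (hzs : zs ∈ Z)
    (hsol : ∀ z ∈ Z, ⟪F zs, zs - z⟫ ≤ 0)
    (z zh : ℕ → EuclideanSpace ℝ (Fin n)) (hz0 : z 0 ∈ Z)
    (hzh : ∀ k, zh k = proj (z k - η • F (z k)))
    (hziter : ∀ k, z (k + 1) = proj (z k - η • F (zh k)))
    (T : ℕ) (hT : 1 ≤ T) (D : ℝ) (hD : 0 < D) :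
    sSup ((fun z' => ⟪F (z T), z T - z'⟫) '' (Z ∩ Metric.closedBall (z T) D)) ≤
      (1 / Real.sqrt T) * (3 * D * ‖z 0 - zs‖ / (η * Real.sqrt (1 - (η * L) ^ 2))) := by
  have hc1 : η * L < 1 := by
    calc η * L < (1 / L) * L := by
          exact mul_lt_mul_of_pos_right hη1 hL
      _ = 1 := by field_simp
  have hc0 : 0 < η * L := mul_pos hη0 hL
  have hc2 : 0 < 1 - (η * L) ^ 2 := by nlinarith
  have hvar := eg_proj_var hconv proj hprojmem hprojmin
  have hmemz : ∀ k, z k ∈ Z := by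
    intro k
    cases k with
    | zero => exact hz0
    | succ m => rw [hziter m]; exact hprojmem _
  have hmemzh : ∀ k, zh k ∈ Z := by
    intro k; rw [hzh k]; exact hprojmem _
  -- the descent inequality
  have hdesc : ∀ k, ‖z (k+1) - zs‖ ^ 2 ≤
      ‖z k - zs‖ ^ 2 - (1 - (η * L) ^ 2) * ‖z k - zh k‖ ^ 2 := by
    intro k
    have hP2 : ⟪(z k - zh k) - η • F (z k), -(zh k - z (k+1))⟫ ≤ 0 := by
      have h := hvar (z k - η • F (z k)) (z (k+1)) (hmemz (k+1))
      rw [← hzh k] at h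
      rw [show (z k - zh k) - η • F (z k) = (z k - η • F (z k)) - zh k by abel,
        show -(zh k - z (k+1)) = z (k+1) - zh k by abel]
      exact h
    have hP1 : ⟪((z k - zh k) + (zh k - z (k+1))) - η • F (zh k), -(z (k+1) - zs)⟫ ≤ 0 := by
      have h := hvar (z k - η • F (zh k)) zs hzs
      rw [← hziter k] at h
      rw [show ((z k - zh k) + (zh k - z (k+1))) - η • F (zh k)
            = (z k - η • F (zh k)) - z (k+1) by abel,
        show -(z (k+1) - zs) = zs - z (k+1) by abel]
      exact h
    have hyu : 0 ≤ ⟪η • F (zh k), (zh k - z (k+1)) + (z (k+1) - zs)⟫ := by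
      rw [show (zh k - z (k+1)) + (z (k+1) - zs) = zh k - zs by abel,
        real_inner_smul_left]
      have h1 := hmono (zh k) (hmemzh k) zs hzs
      have h2 := hsol (zh k) (hmemzh k)
      have h3 : 0 ≤ ⟪F (zh k), zh k - zs⟫ := by
        simp only [inner_sub_left, inner_sub_right] at h1 h2 ⊢
        linarith
      positivity
    have hLb : ‖η • F (zh k) - η • F (z k)‖ ≤ (η * L) * ‖z k - zh k‖ := by
      rw [← smul_sub, norm_smul, Real.norm_eq_abs, abs_of_pos hη0]
      have h := hLip (zh k) (hmemzh k) (z k) (hmemz k)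
      calc η * ‖F (zh k) - F (z k)‖ ≤ η * (L * ‖zh k - z k‖) :=
            mul_le_mul_of_nonneg_left h (le_of_lt hη0)
        _ = (η * L) * ‖z k - zh k‖ := by rw [norm_sub_rev]; ring
    have h := eg_descent (c := η * L) (z k - zh k) (zh k - z (k+1)) (z (k+1) - zs)
      (η • F (z k)) (η • F (zh k)) hP2 hP1 hyu hLb
    rw [show (z k - zh k) + (zh k - z (k+1)) + (z (k+1) - zs) = z k - zs by abel] at h
    exact h
  -- summed bound
  have hsumaux : ∀ m : ℕ,
      (1 - (η * L) ^ 2) * (∑ k ∈ Finset.range m, ‖z k - zh k‖ ^ 2) + ‖z m - zs‖ ^ 2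
        ≤ ‖z 0 - zs‖ ^ 2 := by
    intro m
    induction m with
    | zero => simp
    | succ m ih =>
      rw [Finset.sum_range_succ]
      have h := hdesc m
      nlinarith [h, ih]
  -- the residual sequence
  obtain ⟨g, hgdef⟩ : ∃ g : ℕ → ℝ,
      ∀ k, g k = ‖η • F (z (k+1)) + ((z k - η • F (zh k)) - z (k+1))‖ :=
    ⟨_, fun k => rfl⟩
  have hg0 : ∀ k, 0 ≤ g k := by intro k; rw [hgdef]; positivity
  -- residual monotonicity
  have hgstep : ∀ k, g (k+1) ≤ g k := by
    intro k
    have hmono' : 0 ≤ ⟪η • F (z (k+1)) - η • F (z (k+2)), z (k+1) - z (k+2)⟫ := by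
      rw [← smul_sub, real_inner_smul_left]
      have := hmono (z (k+1)) (hmemz (k+1)) (z (k+2)) (hmemz (k+2))
      positivity
    have hlip' : ‖η • F (zh (k+1)) - η • F (z (k+2))‖ ≤ ‖zh (k+1) - z (k+2)‖ := by
      rw [← smul_sub, norm_smul, Real.norm_eq_abs, abs_of_pos hη0]
      have h := hLip (zh (k+1)) (hmemzh (k+1)) (z (k+2)) (hmemz (k+2))
      calc η * ‖F (zh (k+1)) - F (z (k+2))‖ ≤ η * (L * ‖zh (k+1) - z (k+2)‖) :=
            mul_le_mul_of_nonneg_left h (le_of_lt hη0)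
        _ = (η * L) * ‖zh (k+1) - z (k+2)‖ := by ring
        _ ≤ 1 * ‖zh (k+1) - z (k+2)‖ :=
            mul_le_mul_of_nonneg_right (le_of_lt hc1) (norm_nonneg _)
        _ = ‖zh (k+1) - z (k+2)‖ := one_mul _
    have hC9 : ⟪(z (k+1) - η • F (zh (k+1))) - z (k+2), z (k+1) - z (k+2)⟫ ≤ 0 := by
      have h := hvar (z (k+1) - η • F (zh (k+1))) (z (k+1)) (hmemz (k+1))
      rw [← hziter (k+1)] at h
      exact h
    have hC7 : ⟪(z k - η • F (zh k)) - z (k+1), zh (k+1) - z (k+1)⟫ ≤ 0 := by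
      have h := hvar (z k - η • F (zh k)) (zh (k+1)) (hmemzh (k+1))
      rw [← hziter k] at h
      exact h
    have hC12 : ⟪(z (k+1) - η • F (z (k+1))) - zh (k+1), z (k+2) - zh (k+1)⟫ ≤ 0 := by
      have h := hvar (z (k+1) - η • F (z (k+1))) (z (k+2)) (hmemz (k+2))
      rw [← hzh (k+1)] at h
      exact h
    have h := eg_residual_mono (z (k+1)) (zh (k+1)) (z (k+2))
      ((z k - η • F (zh k)) - z (k+1))
      (η • F (z (k+1))) (η • F (zh (k+1))) (η • F (z (k+2)))
      hmono' hlip'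
      (by rw [show (z (k+1) - η • F (zh (k+1))) - z (k+2)
            = (z (k+1) - η • F (zh (k+1))) - z (k+2) from rfl] at hC9; exact hC9)
      (by
        rw [show zh (k+1) - z (k+1) = zh (k+1) - z (k+1) from rfl] at hC7
        exact hC7)
      (by exact hC12)
    rw [hgdef (k+1), hgdef k]
    calc ‖η • F (z (k+1+1)) + ((z (k+1) - η • F (zh (k+1))) - z (k+1+1))‖
        = ‖η • F (z (k+2)) + ((z (k+1) - η • F (zh (k+1))) - z (k+2))‖ := rfl
      _ ≤ ‖η • F (z (k+1)) + ((z k - η • F (zh k)) - z (k+1))‖ := h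
  -- g k ≤ 3 s k
  have hgs : ∀ k, g k ≤ 3 * ‖z k - zh k‖ := by
    intro k
    have hnon : ‖z (k+1) - zh k‖ ≤ (η * L) * ‖z k - zh k‖ := by
      have h1 := hvar (z k - η • F (zh k)) (zh k) (hmemzh k)
      rw [← hziter k] at h1
      have h2 := hvar (z k - η • F (z k)) (z (k+1)) (hmemz (k+1))
      rw [← hzh k] at h2
      have h := eg_nonexp (z k - η • F (zh k)) (z k - η • F (z k)) (z (k+1)) (zh k) h1 h2
      rw [show (z k - η • F (zh k)) - (z k - η • F (z k))
          = η • F (z k) - η • F (zh k) by abel] at h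
      calc ‖z (k+1) - zh k‖ ≤ ‖η • F (z k) - η • F (zh k)‖ := h
        _ ≤ (η * L) * ‖z k - zh k‖ := by
            rw [← smul_sub, norm_smul, Real.norm_eq_abs, abs_of_pos hη0]
            have h3 := hLip (z k) (hmemz k) (zh k) (hmemzh k)
            calc η * ‖F (z k) - F (zh k)‖ ≤ η * (L * ‖z k - zh k‖) :=
                  mul_le_mul_of_nonneg_left h3 (le_of_lt hη0)
              _ = (η * L) * ‖z k - zh k‖ := by ring
    have htri1 : ‖z k - z (k+1)‖ ≤ ‖z k - zh k‖ + ‖zh k - z (k+1)‖ := by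
      have := dist_triangle (z k) (zh k) (z (k+1))
      simpa [dist_eq_norm] using this
    have hFlip : ‖η • F (z (k+1)) - η • F (zh k)‖ ≤ (η * L) * ‖z (k+1) - zh k‖ := by
      rw [← smul_sub, norm_smul, Real.norm_eq_abs, abs_of_pos hη0]
      have h3 := hLip (z (k+1)) (hmemz (k+1)) (zh k) (hmemzh k)
      calc η * ‖F (z (k+1)) - F (zh k)‖ ≤ η * (L * ‖z (k+1) - zh k‖) :=
            mul_le_mul_of_nonneg_left h3 (le_of_lt hη0)
        _ = (η * L) * ‖z (k+1) - zh k‖ := by ring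
    have hsplit : g k ≤ ‖z k - z (k+1)‖ + ‖η • F (z (k+1)) - η • F (zh k)‖ := by
      rw [hgdef k]
      calc ‖η • F (z (k+1)) + ((z k - η • F (zh k)) - z (k+1))‖
          = ‖(z k - z (k+1)) + (η • F (z (k+1)) - η • F (zh k))‖ := by
            congr 1; abel
        _ ≤ ‖z k - z (k+1)‖ + ‖η • F (z (k+1)) - η • F (zh k)‖ := norm_add_le _ _
    have hrev : ‖zh k - z (k+1)‖ = ‖z (k+1) - zh k‖ := norm_sub_rev _ _
    nlinarith [hsplit, htri1, hFlip, hnon, norm_nonneg (z k - zh k),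
      norm_nonneg (z (k+1) - zh k), hc0, hc1]
  -- index juggling: T = m + 1
  obtain ⟨m, rfl⟩ : ∃ m, T = m + 1 := ⟨T - 1, (Nat.succ_pred_eq_of_pos hT).symm⟩
  -- averaging
  have hganti : ∀ j k : ℕ, j ≤ k → g k ≤ g j :=
    fun j k h => antitone_nat_of_succ_le hgstep h
  have havg : (m + 1 : ℝ) * g m ^ 2 ≤ ∑ k ∈ Finset.range (m+1), g k ^ 2 := by
    have hb : ∀ k ∈ Finset.range (m+1), g m ^ 2 ≤ g k ^ 2 := by
      intro k hk
      have hk' : k ≤ m := Nat.lt_succ_iff.mp (Finset.mem_range.mp hk)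
      exact pow_le_pow_left₀ (hg0 m) (hganti k m hk') 2
    calc (m + 1 : ℝ) * g m ^ 2 = ∑ _k ∈ Finset.range (m+1), g m ^ 2 := by
          rw [Finset.sum_const, Finset.card_range, nsmul_eq_mul]
          push_cast; ring
      _ ≤ ∑ k ∈ Finset.range (m+1), g k ^ 2 := Finset.sum_le_sum hb
  have hsum9 : ∑ k ∈ Finset.range (m+1), g k ^ 2
      ≤ 9 * ∑ k ∈ Finset.range (m+1), ‖z k - zh k‖ ^ 2 := by
    rw [Finset.mul_sum]
    refine Finset.sum_le_sum ?_
    intro k _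
    have h := hgs k
    nlinarith [hg0 k, norm_nonneg (z k - zh k)]
  have hgmb : g m ^ 2 * ((m + 1 : ℝ) * (1 - (η * L) ^ 2)) ≤ 9 * ‖z 0 - zs‖ ^ 2 := by
    have h1 := hsumaux (m+1)
    have h2 : (1 - (η * L) ^ 2) * (∑ k ∈ Finset.range (m+1), ‖z k - zh k‖ ^ 2)
        ≤ ‖z 0 - zs‖ ^ 2 := by linarith [sq_nonneg ‖z (m+1) - zs‖]
    have e1 := mul_le_mul_of_nonneg_left havg hc2.le
    have e2 := mul_le_mul_of_nonneg_left hsum9 hc2.le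
    linarith [e1, e2, h2]
  -- bound on g m
  have hsT : 0 < Real.sqrt ((m + 1 : ℕ) : ℝ) := Real.sqrt_pos.mpr (by positivity)
  have hsc : 0 < Real.sqrt (1 - (η * L) ^ 2) := Real.sqrt_pos.mpr hc2
  have hgm_le : g m * (Real.sqrt ((m + 1 : ℕ) : ℝ) * Real.sqrt (1 - (η * L) ^ 2))
      ≤ 3 * ‖z 0 - zs‖ := by
    have e1 : Real.sqrt ((m + 1 : ℕ) : ℝ) ^ 2 = ((m + 1 : ℕ) : ℝ) :=
      Real.sq_sqrt (by positivity)
    have e2 : Real.sqrt (1 - (η * L) ^ 2) ^ 2 = 1 - (η * L) ^ 2 :=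
      Real.sq_sqrt (le_of_lt hc2)
    have h1 : (g m * (Real.sqrt ((m + 1 : ℕ) : ℝ) * Real.sqrt (1 - (η * L) ^ 2))) ^ 2
        ≤ (3 * ‖z 0 - zs‖) ^ 2 := by
      calc (g m * (Real.sqrt ((m + 1 : ℕ) : ℝ) * Real.sqrt (1 - (η * L) ^ 2))) ^ 2
          = g m ^ 2 * (Real.sqrt ((m + 1 : ℕ) : ℝ) ^ 2 * Real.sqrt (1 - (η * L) ^ 2) ^ 2) := by
            ring
        _ = g m ^ 2 * (((m + 1 : ℕ) : ℝ) * (1 - (η * L) ^ 2)) := by rw [e1, e2]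
        _ ≤ 9 * ‖z 0 - zs‖ ^ 2 := by
            have : ((m + 1 : ℕ) : ℝ) = (m + 1 : ℝ) := by push_cast; ring
            rw [this]; exact hgmb
        _ = (3 * ‖z 0 - zs‖) ^ 2 := by ring
    have hnn : 0 ≤ g m * (Real.sqrt ((m + 1 : ℕ) : ℝ) * Real.sqrt (1 - (η * L) ^ 2)) := by
      have := hg0 m; positivity
    have h2 := Real.sqrt_le_sqrt h1
    rwa [Real.sqrt_sq hnn, Real.sqrt_sq (by positivity)] at h2
  -- final bound for every element of the gap set
  have hRHS0 : 0 ≤ (1 / Real.sqrt ((m + 1 : ℕ) : ℝ)) *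
      (3 * D * ‖z 0 - zs‖ / (η * Real.sqrt (1 - (η * L) ^ 2))) := by positivity
  apply Real.sSup_le _ hRHS0
  rintro v ⟨z', ⟨hz'Z, hz'B⟩, rfl⟩
  have hnrm : ‖z (m+1) - z'‖ ≤ D := by
    have h := Metric.mem_closedBall.mp hz'B
    rw [dist_eq_norm] at h
    calc ‖z (m+1) - z'‖ = ‖z' - z (m+1)‖ := norm_sub_rev _ _
      _ ≤ D := h
  have hn : ⟪(z m - η • F (zh m)) - z (m+1), z' - z (m+1)⟫ ≤ 0 := by
    have h := hvar (z m - η • F (zh m)) z' hz'Z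
    rw [← hziter m] at h
    exact h
  have hgmD : ⟪η • F (z (m+1)) + ((z m - η • F (zh m)) - z (m+1)), z (m+1) - z'⟫
      ≤ g m * D := by
    have hcs := real_inner_le_norm
      (η • F (z (m+1)) + ((z m - η • F (zh m)) - z (m+1))) (z (m+1) - z')
    rw [← hgdef m] at hcs
    calc ⟪η • F (z (m+1)) + ((z m - η • F (zh m)) - z (m+1)), z (m+1) - z'⟫
        ≤ g m * ‖z (m+1) - z'‖ := hcs
      _ ≤ g m * D := mul_le_mul_of_nonneg_left hnrm (hg0 m)
  have hsplit : ⟪η • F (z (m+1)), z (m+1) - z'⟫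
      = ⟪η • F (z (m+1)) + ((z m - η • F (zh m)) - z (m+1)), z (m+1) - z'⟫
        + ⟪(z m - η • F (zh m)) - z (m+1), z' - z (m+1)⟫ := by
    have hns : z' - z (m+1) = -(z (m+1) - z') := (neg_sub _ _).symm
    rw [hns, inner_neg_right, inner_add_left]
    ring
  have hinner : η * ⟪F (z (m+1)), z (m+1) - z'⟫ ≤ g m * D := by
    rw [← real_inner_smul_left]
    calc ⟪η • F (z (m+1)), z (m+1) - z'⟫
        = _ + _ := hsplit
      _ ≤ g m * D + 0 := add_le_add hgmD hn
      _ = g m * D := add_zero _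
  -- conclude
  have hfinal : ⟪F (z (m+1)), z (m+1) - z'⟫ ≤ g m * D / η := by
    rw [le_div_iff₀ hη0]
    calc ⟪F (z (m+1)), z (m+1) - z'⟫ * η = η * ⟪F (z (m+1)), z (m+1) - z'⟫ := by ring
      _ ≤ g m * D := hinner
  have hgm2 : g m ≤ 3 * ‖z 0 - zs‖ /
      (Real.sqrt ((m + 1 : ℕ) : ℝ) * Real.sqrt (1 - (η * L) ^ 2)) :=
    (le_div_iff₀ (by positivity)).mpr hgm_le
  calc ⟪F (z (m+1)), z (m+1) - z'⟫ ≤ g m * D / η := hfinal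
    _ ≤ (3 * ‖z 0 - zs‖ /
          (Real.sqrt ((m + 1 : ℕ) : ℝ) * Real.sqrt (1 - (η * L) ^ 2))) * D / η := by
        gcongr
    _ = (1 / Real.sqrt ((m + 1 : ℕ) : ℝ)) *
          (3 * D * ‖z 0 - zs‖ / (η * Real.sqrt (1 - (η * L) ^ 2))) := by
        field_simp
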